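/- Let s > 0 and let P satisfy H1 and H2. Let γ be a positive solution of the Dyson–Schwinger ODE on (0, x₀] for some x₀ > 0. Then there exist x₁ ∈ (0, x₀] and a constant C > 0 such that γ_c(x) < γ(x) ≤ γ_c(x) + C·x^{1/s} + C·B_s(x, x₁) for all x ∈ (0, x₁], where B_s(x, x₁) = x^{1/s}·∫_x^{x₁} z^{−1/s} dz. In particular lim_{x→0⁺} γ(x) = 0. -/

import Mathlib

open Real MeasureTheory Filter Set

noncomputable section

/-- `γ` is a positive solution of the Dyson–Schwinger ODE
`γ'(x) = (γ(x) + γ(x)² − P(x)) / (s·x·γ(x))` on the set `I`. -/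
def IsDSSolution (s : ℝ) (P γ : ℝ → ℝ) (I : Set ℝ) : Prop :=
  (∀ x ∈ I, 0 < γ x) ∧
    ∀ x ∈ I, HasDerivWithinAt γ ((γ x + (γ x) ^ 2 - P x) / (s * x * γ x)) I x

/-- Hypothesis H1: `P` is twice continuously differentiable on `[0,∞)`,
`P 0 = 0`, and `P x > 0` for `x > 0`. -/
def H1 (P : ℝ → ℝ) : Prop :=
  ContDiffOn ℝ 2 P (Set.Ici 0) ∧ P 0 = 0 ∧ ∀ x > (0 : ℝ), 0 < P x

/-- Hypothesis H2: `P` is strictly increasing on `[0,∞)`. -/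
def H2 (P : ℝ → ℝ) : Prop := StrictMonoOn P (Set.Ici 0)

/-- The nullcline `γ_c(x) = (√(1 + 4 P x) − 1)/2`. -/
def gammaC (P : ℝ → ℝ) (x : ℝ) : ℝ := (Real.sqrt (1 + 4 * P x) - 1) / 2

/-- `B_s(x, x₁) = x^{1/s} ∫_x^{x₁} z^{−1/s} dz`. -/
def Bs (s x x₁ : ℝ) : ℝ := x ^ (1 / s) * ∫ z in x..x₁, z ^ (-(1 / s))


/-!
Above the nullcline exactly `γ + γ² - P > 0`. If `γ(b) ≤ γ_c(b)`, then, `P` being increasing,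
`u = γ - γ_c(b)` satisfies a linear differential inequality `u' ≤ c(x) u` on `[b, x₀]`, and an
integrating factor gives `γ(x₀) ≤ γ_c(b)`, i.e. `γ(x₀) + γ(x₀)² ≤ P(b)`. Choosing `x₁` with
`P(x₁) < γ(x₀) + γ(x₀)²` rules this out for every `b ≤ x₁`.

Above the nullcline `P = γ_c (1 + γ_c) ≤ γ (1 + K x)`, where `P ≤ K x` near `0` because `P` is `C¹`
with `P 0 = 0`. This is precisely `(γ x^{-1/s})' ≥ -(K/s) x^{-1/s}`, and integrating from `x` to
`x₁` yields the upper bound. Both `x^{1/s}` and `B_s(x, x₁)` (a power or `x log (x₁/x)`, in closed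
form) tend to `0`, whence the limit.
-/

open scoped Topology

theorem gammaC_nonneg {P : ℝ → ℝ} {x : ℝ} (hP : 0 ≤ P x) : 0 ≤ gammaC P x := by
  have h := Real.sqrt_le_sqrt (by linarith : (1 : ℝ) ≤ 1 + 4 * P x)
  rw [Real.sqrt_one] at h
  unfold gammaC
  linarith

theorem gammaC_add_sq {P : ℝ → ℝ} {x : ℝ} (hP : 0 ≤ P x) : gammaC P x + gammaC P x ^ 2 = P x := by
  have h := Real.sq_sqrt (by linarith : (0 : ℝ) ≤ 1 + 4 * P x)
  unfold gammaC
  linear_combination h / 4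

theorem nonpos_of_hasDerivAt_le_mul_self {u u' c : ℝ → ℝ} {a b : ℝ} (hab : a ≤ b)
    (hu : ContinuousOn u (Icc a b)) (hu' : ∀ x ∈ Ioo a b, HasDerivAt u (u' x) x)
    (hc : ContinuousOn c (Icc a b)) (hle : ∀ x ∈ Ioo a b, u' x ≤ c x * u x) (ha : u a ≤ 0) :
    u b ≤ 0 := by
  set A : ℝ → ℝ := fun x => ∫ t in a..x, c t
  have hA : ContinuousOn A (Icc a b) := by
    have := intervalIntegral.continuousOn_primitive_interval (μ := volume)
      (hc.integrableOn_Icc.mono_set (uIcc_of_le hab).subset)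
    rwa [uIcc_of_le hab] at this
  have hA' : ∀ x ∈ Ioo a b, HasDerivAt A (c x) x := fun x hx =>
    intervalIntegral.integral_hasDerivAt_right
      ((hc.mono (Icc_subset_Icc_right hx.2.le)).intervalIntegrable_of_Icc hx.1.le)
      ((hc.mono Ioo_subset_Icc_self).stronglyMeasurableAtFilter isOpen_Ioo x hx)
      (hc.continuousAt (Icc_mem_nhds hx.1 hx.2))
  have hanti : AntitoneOn (fun x => u x * exp (-A x)) (Icc a b) := by
    refine antitoneOn_of_hasDerivWithinAt_nonpos (convex_Icc a b) (hu.mul hA.neg.rexp)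
      (fun x hx => ?_) (fun x hx => ?_)
      (f' := fun x => u' x * exp (-A x) + u x * (exp (-A x) * -c x))
    · rw [interior_Icc] at hx ⊢
      exact ((hu' x hx).mul (hA' x hx).neg.exp).hasDerivWithinAt
    · rw [interior_Icc] at hx
      nlinarith [hle x hx, exp_pos (-A x)]
  have h := hanti (left_mem_Icc.2 hab) (right_mem_Icc.2 hab) hab
  simp only [A, intervalIntegral.integral_same, neg_zero, exp_zero, mul_one] at h
  exact nonpos_of_mul_nonpos_left (h.trans ha) (exp_pos _)

theorem ContDiffOn.exists_le_mul_of_map_zero {f : ℝ → ℝ} {a : ℝ} {n : WithTop ℕ∞}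
    (hf : ContDiffOn ℝ n f (Icc 0 a)) (hn : n ≠ 0) (hf0 : f 0 = 0) :
    ∃ K : ℝ, ∀ x ∈ Icc 0 a, f x ≤ K * x := by
  obtain ⟨K, hK⟩ := hf.exists_lipschitzOnWith hn (convex_Icc 0 a) isCompact_Icc
  refine ⟨K, fun x hx => ?_⟩
  have h := hK.dist_le_mul x hx 0 ⟨le_rfl, hx.1.trans hx.2⟩
  rw [hf0, Real.dist_eq, Real.dist_eq, sub_zero, sub_zero, abs_of_nonneg hx.1] at h
  exact (le_abs_self _).trans h

theorem Bs_eq_of_ne_one {s x y : ℝ} (hs : s ≠ 1) (hx : 0 < x) (hy : 0 < y) :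
    Bs s x y = (y ^ (1 - 1 / s) * x ^ (1 / s) - x) / (1 - 1 / s) := by
  have hr : -(1 / s) ≠ -1 := by
    intro h
    exact hs (by simpa using h)
  have hxx : x ^ (1 / s) * x ^ (1 - 1 / s) = x := by
    rw [← rpow_add hx, add_sub_cancel, rpow_one]
  unfold Bs
  rw [integral_rpow (Or.inr ⟨hr, notMem_uIcc_of_lt hx hy⟩), neg_add_eq_sub, mul_div_assoc',
    mul_sub, hxx, mul_comm]

theorem Bs_one_eq {x y : ℝ} (hx : 0 < x) (hy : 0 < y) : Bs 1 x y = x * log y - x * log x := by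
  simp only [Bs, div_one, rpow_one, rpow_neg_one, integral_inv_of_pos hx hy,
    log_div hy.ne' hx.ne']
  ring

theorem tendsto_Bs_nhdsGT_zero {s y : ℝ} (hs : 0 < s) (hy : 0 < y) :
    Tendsto (fun x => Bs s x y) (𝓝[>] 0) (𝓝 0) := by
  rcases eq_or_ne s 1 with rfl | hs1
  · refine Tendsto.congr' (eventually_nhdsWithin_of_forall fun x hx => (Bs_one_eq hx hy).symm) ?_
    have h : Continuous fun x => x * log y - x * log x :=
      (continuous_id.mul continuous_const).sub continuous_mul_log
    simpa using (h.tendsto 0).mono_left nhdsWithin_le_nhds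
  · refine Tendsto.congr'
      (eventually_nhdsWithin_of_forall fun x hx => (Bs_eq_of_ne_one hs1 hx hy).symm) ?_
    have h : Continuous fun x : ℝ => (y ^ (1 - 1 / s) * x ^ (1 / s) - x) / (1 - 1 / s) :=
      ((continuous_const.mul (continuous_rpow_const (by positivity))).sub continuous_id).div_const _
    simpa [hs.ne'] using (h.tendsto 0).mono_left nhdsWithin_le_nhds

theorem Bs_nonneg {s x y : ℝ} (hx : 0 ≤ x) (hxy : x ≤ y) : 0 ≤ Bs s x y :=
  mul_nonneg (rpow_nonneg hx _)
    (intervalIntegral.integral_nonneg hxy fun _ hz => rpow_nonneg (hx.trans hz.1) _)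

theorem tendsto_mul_rpow_add_mul_Bs {s y : ℝ} (hs : 0 < s) (hy : 0 < y) (C : ℝ) :
    Tendsto (fun x => C * x ^ (1 / s) + C * Bs s x y) (𝓝[>] 0) (𝓝 0) := by
  have hpow : Tendsto (fun x : ℝ => x ^ (1 / s)) (𝓝[>] 0) (𝓝 0) := by
    simpa [hs.ne'] using
      ((continuous_rpow_const (one_div_pos.2 hs).le).tendsto 0).mono_left nhdsWithin_le_nhds
  simpa using (hpow.const_mul C).add ((tendsto_Bs_nhdsGT_zero hs hy).const_mul C)

namespace IsDSSolution

variable {s : ℝ} {P γ : ℝ → ℝ} {I : Set ℝ}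

theorem continuousOn (hγ : IsDSSolution s P γ I) : ContinuousOn γ I :=
  fun x hx => (hγ.2 x hx).continuousWithinAt

theorem hasDerivAt_of_Icc_subset (hγ : IsDSSolution s P γ I) {a b x : ℝ} (hI : Icc a b ⊆ I)
    (hx : x ∈ Ioo a b) : HasDerivAt γ ((γ x + γ x ^ 2 - P x) / (s * x * γ x)) x :=
  (hγ.2 x (hI (Ioo_subset_Icc_self hx))).hasDerivAt
    (mem_of_superset (Ioo_mem_nhds hx.1 hx.2) (Ioo_subset_Icc_self.trans hI))

theorem le_gammaC_of_le_gammaC (hγ : IsDSSolution s P γ I) (hs : 0 < s) {b c : ℝ}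
    (hb : 0 < b) (hbc : b ≤ c) (hI : Icc b c ⊆ I) (hP : MonotoneOn P (Icc b c)) (hPb : 0 ≤ P b)
    (hγb : γ b ≤ gammaC P b) : γ c ≤ gammaC P b := by
  set m := gammaC P b
  have hm : m + m ^ 2 = P b := gammaC_add_sq hPb
  have hγcont : ContinuousOn γ (Icc b c) := hγ.continuousOn.mono hI
  have hpos : ∀ x ∈ Icc b c, 0 < s * x * γ x := fun x hx =>
    mul_pos (mul_pos hs (hb.trans_le hx.1)) (hγ.1 x (hI hx))
  -- `γ - m` obeys a linear differential inequality since `γ + γ² - P x ≤ (γ - m)(1 + γ + m)`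
  have key := nonpos_of_hasDerivAt_le_mul_self (u := fun x => γ x - m)
    (c := fun x => (1 + γ x + m) / (s * x * γ x)) hbc (hγcont.sub continuousOn_const)
    (fun x hx => (hγ.hasDerivAt_of_Icc_subset hI hx).sub_const m)
    (((continuousOn_const.add hγcont).add continuousOn_const).div
      ((continuousOn_const.mul continuousOn_id).mul hγcont) fun x hx => (hpos x hx).ne')
    (fun x hx => by
      rw [div_mul_eq_mul_div]
      refine div_le_div_of_nonneg_right ?_ (hpos x (Ioo_subset_Icc_self hx)).le
      have := hP (left_mem_Icc.2 hbc) (Ioo_subset_Icc_self hx) hx.1.le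
      nlinarith)
    (by simpa using hγb)
  simpa using key

theorem gammaC_lt_of_lt_add_sq (hγ : IsDSSolution s P γ I) (hs : 0 < s) {b c : ℝ}
    (hb : 0 < b) (hbc : b ≤ c) (hI : Icc b c ⊆ I) (hP : MonotoneOn P (Icc b c)) (hPb : 0 ≤ P b)
    (hlt : P b < γ c + γ c ^ 2) : gammaC P b < γ b := by
  by_contra! h
  have hc := hγ.le_gammaC_of_le_gammaC hs hb hbc hI hP hPb h
  have hγc := hγ.1 c (hI (right_mem_Icc.2 hbc))
  nlinarith [gammaC_add_sq hPb, gammaC_nonneg hPb]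

theorem le_mul_rpow_add_Bs (hγ : IsDSSolution s P γ I) (hs : 0 < s) {x y K : ℝ}
    (hx : 0 < x) (hxy : x ≤ y) (hI : Icc x y ⊆ I) (hPnn : ∀ z ∈ Ioo x y, 0 ≤ P z)
    (habove : ∀ z ∈ Ioo x y, gammaC P z < γ z) (hK : ∀ z ∈ Ioo x y, P z ≤ K * z) :
    γ x ≤ γ y * y ^ (-(1 / s)) * x ^ (1 / s) + K / s * Bs s x y := by
  set r := -(1 / s)
  have hrpow : ContinuousOn (fun z => z ^ r) (Icc x y) :=
    continuousOn_id.rpow_const fun z hz => Or.inl (hx.trans_le hz.1).ne'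
  have hint := intervalIntegral.integral_le_sub_of_hasDeriv_right_of_le hxy
    (g := fun z => γ z * z ^ r) (φ := fun z => -(K / s) * z ^ r)
    ((hγ.continuousOn.mono hI).mul hrpow)
    (fun z hz => ((hγ.hasDerivAt_of_Icc_subset hI hz).mul
      (hasDerivAt_rpow_const (p := r) (Or.inl (hx.trans hz.1).ne'))).hasDerivWithinAt)
    (continuousOn_const.mul hrpow).integrableOn_Icc
    (fun z hz => by
      have hz0 : 0 < z := hx.trans hz.1
      have hγz : 0 < γ z := hγ.1 z (hI (Ioo_subset_Icc_self hz))
      have hg0 := gammaC_nonneg (hPnn z hz)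
      have hgP := gammaC_add_sq (hPnn z hz)
      have hrpow1 : z ^ (r - 1) = z ^ r / z := by rw [rpow_sub hz0, rpow_one]
      have hnum : 0 ≤ γ z - P z + K * z * γ z := by
        nlinarith [habove z hz, hK z hz, mul_pos hγz hz0]
      have heq : (γ z + γ z ^ 2 - P z) / (s * z * γ z) * z ^ r + γ z * (r * z ^ (r - 1))
          - -(K / s) * z ^ r = z ^ r * ((γ z - P z + K * z * γ z) / (s * z * γ z)) := by
        rw [hrpow1, show r = -(1 / s) from rfl]
        field_simp
        ring
      have := mul_nonneg (rpow_nonneg hz0.le r)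
        (div_nonneg hnum (by positivity : (0 : ℝ) ≤ s * z * γ z))
      linarith)
  rw [intervalIntegral.integral_const_mul] at hint
  have hxr : x ^ r * x ^ (1 / s) = 1 := by rw [← rpow_add hx]; simp [r]
  calc γ x = γ x * x ^ r * x ^ (1 / s) := by rw [mul_assoc, hxr, mul_one]
    _ ≤ (γ y * y ^ r + K / s * ∫ z in x..y, z ^ r) * x ^ (1 / s) :=
        mul_le_mul_of_nonneg_right (by linarith) (rpow_nonneg hx.le _)
    _ = γ y * y ^ r * x ^ (1 / s) + K / s * Bs s x y := by unfold Bs; ring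

theorem exists_le_mul_rpow_add_mul_Bs (hγ : IsDSSolution s P γ I) (hs : 0 < s) {y K : ℝ}
    (hy : 0 < y) (hI : Ioc 0 y ⊆ I) (hPnn : ∀ z ∈ Ioc 0 y, 0 ≤ P z)
    (habove : ∀ z ∈ Ioc 0 y, gammaC P z < γ z) (hK : ∀ z ∈ Ioc 0 y, P z ≤ K * z) :
    ∃ C > 0, ∀ x ∈ Ioc 0 y, γ x ≤ C * x ^ (1 / s) + C * Bs s x y := by
  refine ⟨max (γ y * y ^ (-(1 / s))) (K / s),
    (mul_pos (hγ.1 y (hI (right_mem_Ioc.2 hy))) (rpow_pos_of_pos hy _)).trans_le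
      (le_max_left _ _), fun x hx => ?_⟩
  have hIoo : Ioo x y ⊆ Ioc 0 y := fun z hz => ⟨hx.1.trans hz.1, hz.2.le⟩
  have h := hγ.le_mul_rpow_add_Bs hs hx.1 hx.2 ((Icc_subset_Ioc hx.1 le_rfl).trans hI)
    (fun z hz => hPnn z (hIoo hz)) (fun z hz => habove z (hIoo hz)) (fun z hz => hK z (hIoo hz))
  have h₁ := mul_le_mul_of_nonneg_right (le_max_left (γ y * y ^ (-(1 / s))) (K / s))
    (rpow_nonneg hx.1.le (1 / s))
  have h₂ := mul_le_mul_of_nonneg_right (le_max_right (γ y * y ^ (-(1 / s))) (K / s))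
    (Bs_nonneg (s := s) hx.1.le hx.2)
  linarith

end IsDSSolution

theorem stmt_10 (s : ℝ) (hs : 0 < s) (P : ℝ → ℝ) (hP1 : H1 P) (hP2 : H2 P)
    (x₀ : ℝ) (hx₀ : 0 < x₀) (γ : ℝ → ℝ)
    (hγ : IsDSSolution s P γ (Set.Ioc 0 x₀)) :
    ∃ x₁ ∈ Set.Ioc (0 : ℝ) x₀, ∃ C > (0 : ℝ),
      (∀ x ∈ Set.Ioc (0 : ℝ) x₁,
        gammaC P x < γ x ∧ γ x ≤ gammaC P x + C * x ^ (1 / s) + C * Bs s x x₁) ∧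
      Filter.Tendsto γ (nhdsWithin 0 (Set.Ioi 0)) (nhds 0) := by
  obtain ⟨hPsm, hP0, hPpos⟩ := hP1
  have hPnn : ∀ x, 0 ≤ x → 0 ≤ P x := fun x hx =>
    hx.eq_or_lt.elim (fun h => h ▸ hP0.ge) fun h => (hPpos x h).le
  have hPmono : MonotoneOn P (Ici 0) := hP2.monotoneOn
  obtain ⟨x₁, ⟨hx₁, hx₁x₀⟩, hPx₁⟩ : ∃ x₁ ∈ Ioc 0 x₀, P x₁ < γ x₀ + γ x₀ ^ 2 := by
    have hγx₀ : 0 < γ x₀ := hγ.1 x₀ (right_mem_Ioc.2 hx₀)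
    have hP : Tendsto P (𝓝[>] 0) (𝓝 0) := by
      simpa [ContinuousWithinAt, hP0] using
        (hPsm.continuousOn 0 self_mem_Ici).mono Ioi_subset_Ici_self
    have hlt : (0 : ℝ) < γ x₀ + γ x₀ ^ 2 := by positivity
    obtain ⟨x, hxP, hx⟩ := ((hP.eventually (gt_mem_nhds hlt)).and (Ioc_mem_nhdsGT hx₀)).exists
    exact ⟨x, hx, hxP⟩
  have habove : ∀ x ∈ Ioc 0 x₁, gammaC P x < γ x := fun x hx =>
    hγ.gammaC_lt_of_lt_add_sq hs hx.1 (hx.2.trans hx₁x₀) (Icc_subset_Ioc hx.1 le_rfl)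
      (hPmono.mono fun z hz => hx.1.le.trans hz.1) (hPnn x hx.1.le)
      ((hPmono hx.1.le hx₁.le hx.2).trans_lt hPx₁)
  obtain ⟨K, hK⟩ :=
    (hPsm.mono Icc_subset_Ici_self).exists_le_mul_of_map_zero (a := x₁) two_ne_zero hP0
  obtain ⟨C, hC, hbound⟩ := hγ.exists_le_mul_rpow_add_mul_Bs hs hx₁ (Ioc_subset_Ioc_right hx₁x₀)
    (fun z hz => hPnn z hz.1.le) habove fun z hz => hK z (Ioc_subset_Icc_self hz)
  refine ⟨x₁, ⟨hx₁, hx₁x₀⟩, C, hC, fun x hx => ⟨habove x hx, ?_⟩, ?_⟩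
  · linarith [hbound x hx, gammaC_nonneg (hPnn x hx.1.le)]
  · refine tendsto_of_tendsto_of_tendsto_of_le_of_le' tendsto_const_nhds
      (tendsto_mul_rpow_add_mul_Bs hs hx₁ C) ?_ ?_
    · filter_upwards [Ioc_mem_nhdsGT hx₁] with x hx using (hγ.1 x ⟨hx.1, hx.2.trans hx₁x₀⟩).le
    · filter_upwards [Ioc_mem_nhdsGT hx₁] with x hx using hbound x hx
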